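/- arXiv:0911.0232 — 4 statements merged into one kernel-verified Lean document; each statement's English description precedes it below -/
import Mathlib

section
/- If A is an irreducible nonnegative n×n matrix that is weight-balanced and its row-normalization φ(A) is doubly stochastic, then the minimum row sum equals all other row sums; equivalently, it is impossible that some row sum is strictly smaller than all the others. -/
/-! Let `m` be the minimal row sum and `C_k` the sum of row `k`. If row `j` has sum `m`, then by
weight balance column `j` also sums to `m`, so `∑_k a_kj / C_k = 1 = ∑_k a_kj / m` while
`a_kj / C_k ≤ a_kj / m` termwise; hence `C_k = m` whenever `a_kj ≠ 0`. The set of rows of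
minimal sum is thus closed under predecessors, and irreducibility forces it to be everything. -/

open Finset

variable {ι : Type*} [Fintype ι]

theorem forall_of_irreducible_of_closed_pred {R : Type*} [Zero R] [DecidableEq ι]
    {A : Matrix ι ι R}
    (hirr : ∀ J : Finset ι, J ≠ ∅ → J ≠ univ → ∃ j ∈ J, ∃ k ∈ Jᶜ, A j k ≠ 0)
    {P : ι → Prop} {i : ι} (hi : P i) (hclosed : ∀ j k, P k → A j k ≠ 0 → P j) (k : ι) :
    P k := by
  classical
  by_contra hk
  obtain ⟨j, hj, l, hl, hjl⟩ := hirr ({k | ¬P k} : Finset ι)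
    (nonempty_iff_ne_empty.mp ⟨k, by simpa using hk⟩)
    (fun h => by simpa [hi] using eq_univ_iff_forall.mp h i)
  simp only [mem_compl, mem_filter, mem_univ, true_and, not_not] at hj hl
  exact hj (hclosed j l hl hjl)

section

variable {K : Type*} [Field K] [LinearOrder K] [IsStrictOrderedRing K]

theorem eq_of_sum_div_eq_sum_div_of_le {w c : ι → K} {m : K} (hw : ∀ k, 0 ≤ w k) (hm : 0 < m)
    (hle : ∀ k, m ≤ c k) (hsum : ∑ k, w k / c k = ∑ k, w k / m) {k : ι} (hk : w k ≠ 0) :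
    c k = m := by
  have hterm : ∀ k ∈ univ, w k / c k ≤ w k / m := fun k _ =>
    div_le_div_of_nonneg_left (hw k) hm (hle k)
  have heq := (sum_eq_sum_iff_of_le hterm).mp hsum k (mem_univ k)
  have hwk : 0 < w k := (hw k).lt_of_ne' hk
  have hck : 0 < c k := hm.trans_le (hle k)
  rw [div_eq_div_iff hck.ne' hm.ne'] at heq
  exact (mul_left_cancel₀ hwk.ne' heq).symm

variable {A : Matrix ι ι K}

theorem row_sum_pos_of_col_sum_div_row_sum_eq_one (hnn : ∀ i j, 0 ≤ A i j)
    (hwb : ∀ i, ∑ j, A i j = ∑ j, A j i) (hcol : ∀ j, ∑ i, A i j / ∑ l, A i l = 1) (j : ι) :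
    0 < ∑ l, A j l := by
  refine (sum_nonneg fun l _ => hnn j l).lt_of_ne fun hzero => ?_
  have hcol_zero : ∀ i, A i j = 0 := fun i =>
    (sum_eq_zero_iff_of_nonneg fun i _ => hnn i j).mp ((hwb j).symm.trans hzero.symm) i
      (mem_univ i)
  simpa [hcol_zero] using hcol j

theorem row_sum_eq_of_ne_zero_of_row_sum_eq_min (hnn : ∀ i j, 0 ≤ A i j)
    (hwb : ∀ i, ∑ j, A i j = ∑ j, A j i) (hcol : ∀ j, ∑ i, A i j / ∑ l, A i l = 1) {i j : ι}
    (hmin : ∀ k, ∑ l, A i l ≤ ∑ l, A k l) (hj : ∑ l, A j l = ∑ l, A i l) {k : ι}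
    (hkj : A k j ≠ 0) : ∑ l, A k l = ∑ l, A i l := by
  have hm : 0 < ∑ l, A i l := row_sum_pos_of_col_sum_div_row_sum_eq_one hnn hwb hcol i
  refine eq_of_sum_div_eq_sum_div_of_le (fun k => hnn k j) hm hmin ?_ hkj
  rw [hcol j, ← sum_div, ← hwb j, hj, div_self hm.ne']

end

theorem min_row_sum_eq_all_general {n : ℕ} (A : Matrix (Fin n) (Fin n) ℝ)
    (hnn : ∀ i j, 0 ≤ A i j)
    (hirr : ∀ J : Finset (Fin n), J ≠ ∅ → J ≠ Finset.univ →
      ∃ j ∈ J, ∃ k ∈ Jᶜ, A j k ≠ 0)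
    (hwb : ∀ i, ∑ j, A i j = ∑ j, A j i)
    (hcol : ∀ j, ∑ i, A i j / (∑ l, A i l) = 1) :
    ∀ i, (∀ k, ∑ l, A i l ≤ ∑ l, A k l) → ∀ k, ∑ l, A k l = ∑ l, A i l := fun _ hmin =>
  forall_of_irreducible_of_closed_pred hirr rfl fun _ _ hk hjk =>
    row_sum_eq_of_ne_zero_of_row_sum_eq_min hnn hwb hcol hmin hk hjk

/-- If `A` is irreducible, nonnegative, weight-balanced, has positive row sums
and its row normalization has all column sums equal to 1, then the minimum row
sum equals all the other row sums (so no row sum can be strictly smaller than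
all others). -/
theorem min_row_sum_eq_all {n : ℕ} (A : Matrix (Fin n) (Fin n) ℝ)
    (hnn : ∀ i j, 0 ≤ A i j)
    (hirr : ∀ J : Finset (Fin n), J ≠ ∅ → J ≠ Finset.univ →
      ∃ j ∈ J, ∃ k ∈ Jᶜ, A j k ≠ 0)
    (hwb : ∀ i, ∑ j, A i j = ∑ j, A j i)
    (hpos : ∀ k, 0 < ∑ l, A k l)
    (hcol : ∀ j, ∑ i, A i j / (∑ l, A i l) = 1) :
    ∀ i, (∀ k, ∑ l, A i l ≤ ∑ l, A k l) → ∀ k, ∑ l, A k l = ∑ l, A i l :=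
  min_row_sum_eq_all_general A hnn hirr hwb hcol
end

section
/- A nonnegative n×n matrix A is doubly stochastic if and only if A can be written as a convex combination A = ∑_i λ_i P_i of permutation matrices P_i with λ_i ≥ 0 and ∑_i λ_i = 1 (Birkhoff–von Neumann theorem). -/
theorem mem_convexHull_range_iff_exists_fin {R E ι : Type*} [Field R] [LinearOrder R]
    [IsStrictOrderedRing R] [AddCommGroup E] [Module R E] (f : ι → E) (x : E) :
    x ∈ convexHull R (Set.range f) ↔
      ∃ (k : ℕ) (w : Fin k → R) (g : Fin k → ι),
        (∀ m, 0 ≤ w m) ∧ ∑ m, w m = 1 ∧ x = ∑ m, w m • f (g m) := by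
  constructor
  · rw [mem_convexHull_iff_exists_fintype]
    rintro ⟨κ, _, w, z, hw₀, hw₁, hz, rfl⟩
    choose g hg using hz
    let e := (Fintype.equivFin κ).symm
    refine ⟨Fintype.card κ, w ∘ e, g ∘ e, fun m => hw₀ _, ?_, ?_⟩
    · rwa [Function.comp_def, e.sum_comp w]
    · simp only [Function.comp_apply, hg]
      exact (e.sum_comp fun i => w i • z i).symm
  · rintro ⟨k, w, g, hw₀, hw₁, rfl⟩
    exact mem_convexHull_of_exists_fintype w (f ∘ g) hw₀ hw₁ (fun m => ⟨g m, rfl⟩) rfl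

theorem Equiv.Perm.permMatrix_eq_ite {n R : Type*} [DecidableEq n] [Zero R] [One R]
    (σ : Equiv.Perm n) : σ.permMatrix R = fun i j => if σ i = j then 1 else 0 := by
  ext i j
  simp [PEquiv.toMatrix_apply, eq_comm]

/-- Birkhoff–von Neumann: a nonnegative matrix is doubly stochastic iff it is a
convex combination of permutation matrices. -/
theorem doubly_stochastic_iff_convex_comb_of_permutations {n : ℕ}
    (A : Matrix (Fin n) (Fin n) ℝ) (hnn : ∀ i j, 0 ≤ A i j) :
    ((∀ i, ∑ j, A i j = 1) ∧ (∀ j, ∑ i, A i j = 1)) ↔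
    ∃ (k : ℕ) (w : Fin k → ℝ) (σ : Fin k → Equiv.Perm (Fin n)),
      (∀ m, 0 ≤ w m) ∧ (∑ m, w m = 1) ∧
      A = ∑ m, w m • (fun i j => if σ m i = j then (1 : ℝ) else 0) := by
  have hA : ((∀ i, ∑ j, A i j = 1) ∧ (∀ j, ∑ i, A i j = 1)) ↔ A ∈ doublyStochastic ℝ (Fin n) := by
    simp only [mem_doublyStochastic_iff_sum, hnn, implies_true, true_and]
  rw [hA, ← SetLike.mem_coe, doublyStochastic_eq_convexHull_permMatrix]
  simp only [Equiv.Perm.permMatrix_eq_ite]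
  exact mem_convexHull_range_iff_exists_fin _ A
end

section
/- For a doubly stochasticable strongly connected digraph G = (V,E), the DS-character satisfies max{max_v d_out(v), max_v d_in(v)} ≤ ds(G) ≤ |E| − |V| + 1. -/
open Finset Matrix

/-- From a doubly stochastic matrix, through every positive entry there passes a
permutation supported on positive entries. -/
lemma exists_perm_through_entry {n : ℕ} {A : Matrix (Fin n) (Fin n) ℝ}
    (hA : A ∈ doublyStochastic ℝ (Fin n)) {i j : Fin n} (hij : 0 < A i j) :
    ∃ σ : Equiv.Perm (Fin n), σ i = j ∧ ∀ k, 0 < A k (σ k) := by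
  obtain ⟨w, hw0, hw1, hwA⟩ := exists_eq_sum_perm_of_mem_doublyStochastic hA
  have hentry : ∀ a b, ∑ σ : Equiv.Perm (Fin n), w σ * (σ.permMatrix ℝ) a b = A a b := by
    intro a b
    have := congrFun (congrFun hwA a) b
    simpa [Matrix.sum_apply] using this
  have hterm : ∀ (σ : Equiv.Perm (Fin n)) a b, 0 ≤ w σ * (σ.permMatrix ℝ) a b := by
    intro σ a b
    refine mul_nonneg (hw0 σ) ?_
    simp only [Equiv.Perm.permMatrix, PEquiv.toMatrix_apply, Equiv.toPEquiv_apply,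
      Option.mem_def, Option.some.injEq]
    split <;> norm_num
  have hpos : 0 < ∑ σ : Equiv.Perm (Fin n), w σ * (σ.permMatrix ℝ) i j := by
    rw [hentry]; exact hij
  obtain ⟨σ, -, hσ⟩ := Finset.exists_lt_of_sum_lt (f := fun _ => (0 : ℝ))
    (g := fun σ : Equiv.Perm (Fin n) => w σ * (σ.permMatrix ℝ) i j) (by simpa using hpos)
  have hwσ : 0 < w σ := by
    rcases lt_or_ge 0 (w σ) with h | h
    · exact h
    · exfalso
      have : w σ * (σ.permMatrix ℝ) i j ≤ 0 := by
        have h2 : (0:ℝ) ≤ (σ.permMatrix ℝ) i j := by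
          simp only [Equiv.Perm.permMatrix, PEquiv.toMatrix_apply, Equiv.toPEquiv_apply,
            Option.mem_def, Option.some.injEq]
          split <;> norm_num
        exact mul_nonpos_of_nonpos_of_nonneg h h2
      linarith
  have hσij : σ i = j := by
    by_contra h
    have : (σ.permMatrix ℝ) i j = 0 := by
      simp [Equiv.Perm.permMatrix, PEquiv.toMatrix_apply, Equiv.toPEquiv_apply, h]
    rw [this] at hσ
    simp at hσ
  refine ⟨σ, hσij, fun k => ?_⟩
  have hle : w σ * (σ.permMatrix ℝ) k (σ k) ≤ A k (σ k) := by
    rw [← hentry k (σ k)]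
    exact Finset.single_le_sum (fun τ _ => hterm τ k (σ k)) (Finset.mem_univ σ)
  have : (σ.permMatrix ℝ) k (σ k) = 1 := by
    simp [Equiv.Perm.permMatrix, PEquiv.toMatrix_apply, Equiv.toPEquiv_apply]
  rw [this, mul_one] at hle
  exact lt_of_lt_of_le hwσ hle

/-- Bounds on the DS-character `d` of a doubly stochasticable strongly
connected digraph: `max{max_v d_out(v), max_v d_in(v)} ≤ d ≤ |E| - |V| + 1`. -/
theorem DS_character_bounds {n : ℕ}
    (E : Fin n → Fin n → Prop)
    (hsc : ∀ i j, Relation.ReflTransGen E i j)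
    (hds : ∃ A : Matrix (Fin n) (Fin n) ℝ, (∀ i j, 0 ≤ A i j) ∧
      (∀ i j, 0 < A i j ↔ E i j) ∧
      (∀ i, ∑ j, A i j = 1) ∧ (∀ j, ∑ i, A i j = 1))
    (d : ℕ)
    (hd : d = sInf {ξ : ℕ | ∃ σ : Fin ξ → Equiv.Perm (Fin n),
      (∀ m i, E i (σ m i)) ∧ ∀ i j, E i j → ∃ m, σ m i = j}) :
    (∀ v, Nat.card {j : Fin n // E v j} ≤ d) ∧
    (∀ v, Nat.card {j : Fin n // E j v} ≤ d) ∧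
    d ≤ Nat.card {p : Fin n × Fin n // E p.1 p.2} - n + 1 := by
  classical
  obtain ⟨A, hA0, hApos, hrow, hcol⟩ := hds
  have hAds : A ∈ doublyStochastic ℝ (Fin n) :=
    mem_doublyStochastic_iff_sum.2 ⟨hA0, hrow, hcol⟩
  set S : Set ℕ := {ξ : ℕ | ∃ σ : Fin ξ → Equiv.Perm (Fin n),
      (∀ m i, E i (σ m i)) ∧ ∀ i j, E i j → ∃ m, σ m i = j} with hS
  set e : ℕ := Nat.card {p : Fin n × Fin n // E p.1 p.2} with he
  -- key: through every edge there is a permutation contained in E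
  have key : ∀ i j, E i j → ∃ σ : Equiv.Perm (Fin n), σ i = j ∧ ∀ k, E k (σ k) := by
    intro i j hij
    obtain ⟨σ, h1, h2⟩ := exists_perm_through_entry hAds ((hApos i j).2 hij)
    exact ⟨σ, h1, fun k => (hApos k (σ k)).1 (h2 k)⟩
  choose τ hτ1 hτ2 using key
  -- membership of e - n + 1 in S
  have hmem : (e - n + 1) ∈ S := by
    rcases Nat.eq_zero_or_pos n with hn | hn
    · subst hn
      refine ⟨fun _ => 1, fun m i => i.elim0, fun i => i.elim0⟩
    · -- pick some edge out of vertex 0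
      have h0 : ∃ j0, 0 < A ⟨0, hn⟩ j0 := by
        by_contra h
        push_neg at h
        have : ∑ j, A ⟨0, hn⟩ j ≤ 0 :=
          Finset.sum_nonpos (fun j _ => h j)
        rw [hrow ⟨0, hn⟩] at this
        linarith
      obtain ⟨j0, hj0⟩ := h0
      set σ0 : Equiv.Perm (Fin n) := τ ⟨0, hn⟩ j0 ((hApos _ _).1 hj0) with hσ0def
      have hσ0 : ∀ k, E k (σ0 k) := hτ2 _ _ _
      -- edge counting
      set Efin : Finset (Fin n × Fin n) := Finset.univ.filter (fun p => E p.1 p.2) with hEfin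
      have hecard : e = Efin.card := by
        rw [he, Nat.card_eq_fintype_card, Fintype.card_subtype]
      set Diag : Finset (Fin n × Fin n) := Finset.univ.image (fun v => (v, σ0 v)) with hDiag
      have hDiagcard : Diag.card = n := by
        rw [hDiag, Finset.card_image_of_injective _ (fun a b h => congrArg Prod.fst h)]
        simp
      have hDsub : Diag ⊆ Efin := by
        intro p hp
        rw [hDiag] at hp
        simp only [Finset.mem_image, Finset.mem_univ, true_and] at hp
        obtain ⟨v, rfl⟩ := hp
        simp [hEfin, hσ0 v]
      set R : Finset (Fin n × Fin n) := Efin \ Diag with hR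
      have hRcard : R.card = e - n := by
        rw [hR, Finset.card_sdiff_of_subset hDsub, hDiagcard, hecard]
      -- the family of permutations
      have hmemE : ∀ p : ↥R, E (p.1.1) (p.1.2) :=
        fun p => (Finset.mem_filter.1 (Finset.mem_sdiff.1 p.2).1).2
      refine ⟨fun m => if h : (m : ℕ) < R.card
        then τ _ _ (hmemE (R.equivFin.symm ⟨(m : ℕ), h⟩)) else σ0, ?_, ?_⟩
      · intro m i
        by_cases h : (m : ℕ) < R.card
        · simp only [h, dif_pos]
          exact hτ2 _ _ _ i
        · simp only [h, dif_neg, not_false_iff]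
          exact hσ0 i
      · intro i j hij
        by_cases hdiag : j = σ0 i
        · refine ⟨⟨e - n, by omega⟩, ?_⟩
          have hnotlt : ¬ ((⟨e - n, by omega⟩ : Fin (e - n + 1)) : ℕ) < R.card := by
            rw [hRcard]; simp
          simp only [hnotlt, dif_neg, not_false_iff]
          exact hdiag.symm
        · have hmemR : (i, j) ∈ R := by
            rw [hR, Finset.mem_sdiff]
            constructor
            · rw [hEfin]; simp [hij]
            · rw [hDiag]
              simp only [Finset.mem_image, Finset.mem_univ, true_and, not_exists]
              intro v hv
              apply hdiag
              have h1 : v = i := congrArg Prod.fst hv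
              have h2 : σ0 v = j := congrArg Prod.snd hv
              rw [← h2, h1]
          set k : Fin R.card := R.equivFin ⟨(i, j), hmemR⟩ with hk
          have hklt : (k : ℕ) < e - n + 1 := by
            have := k.isLt
            omega
          refine ⟨⟨(k : ℕ), hklt⟩, ?_⟩
          have hlt : ((⟨(k : ℕ), hklt⟩ : Fin (e - n + 1)) : ℕ) < R.card := k.isLt
          simp only [hlt, dif_pos]
          have heq : (⟨((⟨(k : ℕ), hklt⟩ : Fin (e - n + 1)) : ℕ), hlt⟩ : Fin R.card) = k := by
            ext; rfl
          rw [heq]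
          have hsymm : R.equivFin.symm k = ⟨(i, j), hmemR⟩ := by
            rw [hk, Equiv.symm_apply_apply]
          -- rewrite the subtype value
          have : ∀ (p : ↥R) (hp : E p.1.1 p.1.2), p = (⟨(i,j), hmemR⟩ : ↥R) →
              τ p.1.1 p.1.2 hp i = j := by
            rintro p hp rfl
            exact hτ1 _ _ _
          exact this _ _ hsymm
  have hne : S.Nonempty := ⟨_, hmem⟩
  have hdS : d ∈ S := by rw [hd]; exact Nat.sInf_mem hne
  have hdle : d ≤ e - n + 1 := by rw [hd]; exact Nat.sInf_le hmem
  obtain ⟨σ, hσ1, hσ2⟩ := hdS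
  refine ⟨?_, ?_, hdle⟩
  · intro v
    have hex : ∀ j : {j : Fin n // E v j}, ∃ m : Fin d, σ m v = (j : Fin n) :=
      fun j => hσ2 v j j.2
    choose f hf using hex
    have hinj : Function.Injective f := by
      intro a b hab
      apply Subtype.ext
      rw [← hf a, ← hf b, hab]
    calc Nat.card {j : Fin n // E v j} ≤ Nat.card (Fin d) :=
          Nat.card_le_card_of_injective f hinj
      _ = d := by simp [Nat.card_eq_fintype_card]
  · intro v
    have hex : ∀ j : {j : Fin n // E j v}, ∃ m : Fin d, σ m (j : Fin n) = v :=
      fun j => hσ2 j v j.2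
    choose f hf using hex
    have hinj : Function.Injective f := by
      intro a b hab
      apply Subtype.ext
      have : σ (f a) (a : Fin n) = σ (f a) (b : Fin n) := by
        rw [hf a, hab, hf b]
      exact (σ (f a)).injective this
    calc Nat.card {j : Fin n // E j v} ≤ Nat.card (Fin d) :=
          Nat.card_le_card_of_injective f hinj
      _ = d := by simp [Nat.card_eq_fintype_card]
end

section
/- For the weight-balancing imbalance-correcting update, the Lyapunov function V_wb(A) = ∑_i |∑_j a_{ij} − ∑_j a_{ji}| is non-increasing: if an agent v_i with positive imbalance ω(v_i) > 0 increases the weight of a single out-edge (v_i, v_j), j ≠ i, by ω(v_i) and all other weights are unchanged, then V_wb of the new matrix is at most V_wb of the old matrix. -/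
/-!
Adding `ω(v_i)` to `a_{ij}` shifts the imbalance vector by `ω(v_i)` from vertex `i` to vertex
`j`: vertex `i` becomes balanced, so `∑ |ω|` loses `|ω(v_i)|` there, and by the triangle
inequality it gains at most `|ω(v_i)|` at `j`.
-/

open Finset

namespace Matrix

variable {ι R : Type*} [Fintype ι]

/-- The imbalance `ω(v_k)`, for `A` the weighted adjacency matrix. -/
def imbalance [AddCommGroup R] (A : Matrix ι ι R) (k : ι) : R :=
  ∑ u, A u k - ∑ u, A k u

theorem imbalance_add [AddCommGroup R] (A B : Matrix ι ι R) :
    (A + B).imbalance = A.imbalance + B.imbalance := by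
  ext k
  simp only [imbalance, add_apply, sum_add_distrib, Pi.add_apply]
  abel

theorem sum_single_apply_left [DecidableEq ι] [AddCommMonoid R] (i j k : ι) (c : R) :
    ∑ u, single i j c u k = (Pi.single j c : ι → R) k := by
  simp [single_apply, Pi.single_apply, ite_and, eq_comm]

theorem sum_single_apply_right [DecidableEq ι] [AddCommMonoid R] (i j k : ι) (c : R) :
    ∑ u, single i j c k u = (Pi.single i c : ι → R) k := by
  simp [single_apply, Pi.single_apply, ite_and, eq_comm]

theorem imbalance_single [DecidableEq ι] [AddCommGroup R] (i j : ι) (c : R) :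
    (single i j c).imbalance = Pi.single j c - Pi.single i c := by
  ext k
  rw [imbalance, sum_single_apply_left, sum_single_apply_right, Pi.sub_apply]

end Matrix

section Redistribution

variable {ι R : Type*} [DecidableEq ι]
  [AddCommGroup R] [LinearOrder R] [IsOrderedAddMonoid R]

theorem abs_add_single_sub_single_le (ω : ι → R) {i j : ι} (hij : i ≠ j) (k : ι) :
    |(ω + Pi.single j (ω i) - Pi.single i (ω i) : ι → R) k| ≤
      |ω k| + (Pi.single j |ω i| : ι → R) k - (Pi.single i |ω i| : ι → R) k := by
  rcases eq_or_ne k i with rfl | hki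
  · simp [hij.symm]
  rcases eq_or_ne k j with rfl | hkj
  · simpa [hki] using abs_add_le (ω k) (ω i)
  · simp [hki, hkj]

theorem sum_abs_add_single_sub_single_le [Fintype ι] (ω : ι → R) {i j : ι} (hij : i ≠ j) :
    ∑ k, |(ω + Pi.single j (ω i) - Pi.single i (ω i) : ι → R) k| ≤ ∑ k, |ω k| := by
  calc ∑ k, |(ω + Pi.single j (ω i) - Pi.single i (ω i) : ι → R) k|
      ≤ ∑ k, (|ω k| + (Pi.single j |ω i| : ι → R) k - (Pi.single i |ω i| : ι → R) k) :=
        sum_le_sum fun k _ ↦ abs_add_single_sub_single_le ω hij k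
    _ = ∑ k, |ω k| := by simp [sum_add_distrib, sum_sub_distrib]

end Redistribution

theorem lyapunov_nonincreasing_general {n : ℕ}
    (A : Matrix (Fin n) (Fin n) ℝ)
    (i j : Fin n) (hij : i ≠ j)
    (B : Matrix (Fin n) (Fin n) ℝ)
    (hB : B = A + Matrix.single i j ((∑ u, A u i) - (∑ u, A i u))) :
    ∑ k, |(∑ u, B u k) - (∑ u, B k u)| ≤
      ∑ k, |(∑ u, A u k) - (∑ u, A k u)| := by
  have hωB : B.imbalance =
      A.imbalance + Pi.single j (A.imbalance i) - Pi.single i (A.imbalance i) := by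
    rw [hB, Matrix.imbalance_add, Matrix.imbalance_single, add_sub_assoc]
    rfl
  show ∑ k, |B.imbalance k| ≤ ∑ k, |A.imbalance k|
  rw [hωB]
  exact sum_abs_add_single_sub_single_le A.imbalance hij

/-- The Lyapunov function `V_wb(A) = ∑_i |ω(v_i)|` is non-increasing along the
imbalance-correcting update: if agent `i`, with positive imbalance, adds her
imbalance to the weight of the single out-edge `(i,j)`, `j ≠ i`, then `V_wb`
does not increase. -/
theorem lyapunov_nonincreasing {n : ℕ}
    (A : Matrix (Fin n) (Fin n) ℝ) (hnn : ∀ i j, 0 ≤ A i j)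
    (i j : Fin n) (hij : i ≠ j)
    (hpos : 0 < (∑ u, A u i) - (∑ u, A i u))
    (B : Matrix (Fin n) (Fin n) ℝ)
    (hB : B = A + Matrix.single i j ((∑ u, A u i) - (∑ u, A i u))) :
    ∑ k, |(∑ u, B u k) - (∑ u, B k u)| ≤
      ∑ k, |(∑ u, A u k) - (∑ u, A k u)| :=
  lyapunov_nonincreasing_general A i j hij B hB
end
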